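/- In the upper half-plane model of ℍ², fix A ≥ 0 and let z = (x,y) with y > 0 satisfy: (a) the angle at O(h) = (0, e^h) between z and the boundary point I∞ = (0,0) is at most A e^{-h}, and (b) d(O(h), z) ≥ h. Then for all sufficiently large h (depending only on A): |x| ≤ A and y ≤ 3/2. -/

import Mathlib

/-! Move to the disc model centred at `O(h)` by the Cayley map `z ↦ (z - i eʰ) / (z + i eʰ)`, which
sends `I∞` to `-1`. An angle `θ < π / 2` with `-1` forces `‖z‖ < eʰ`, and `sin θ ≤ θ ≤ A e⁻ʰ`
becomes `2 |x| eʰ ≤ A e⁻ʰ ‖z² + e²ʰ‖ ≤ 2 A eʰ`. On the other side `e^d ≤ 2 cosh d`, so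
`d(O(h), z) ≥ h` gives `e²ʰ y ≤ ‖z‖² + e²ʰ < 2 e²ʰ`; thus `y < 2`, and then
`(y - 1) e²ʰ ≤ A² + 4` yields `y ≤ 3 / 2` as soon as `eʰ ≥ 2 A + 3`. -/

open Real

noncomputable section

/-- Inverse hyperbolic cosine. -/
def arcosh (x : ℝ) : ℝ := Real.log (x + Real.sqrt (x ^ 2 - 1))

/-- The hyperbolic distance in the upper half-plane model `{(x,y) : y > 0}` (points
encoded as complex numbers), given by the closed formula
`cosh d(z,w) = 1 + ((x_z − x_w)² + (y_z − y_w)²)/(2 y_z y_w)`. -/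
def dHalf (z w : ℂ) : ℝ :=
  _root_.arcosh (1 + ((z.re - w.re) ^ 2 + (z.im - w.im) ^ 2) / (2 * z.im * w.im))

/-- The conformal isometry from the half-plane to the Poincaré disc sending
`O(h) = (0, e^h)` to the center. -/
def toDisc (h : ℝ) (z : ℂ) : ℂ :=
  ((z.re ^ 2 + z.im ^ 2 - Real.exp (2 * h) : ℝ) + (-2 * z.re * Real.exp h : ℝ) * Complex.I) /
    ((z.re ^ 2 + (z.im + Real.exp h) ^ 2 : ℝ) : ℂ)

/-- The hyperbolic angle at `O(h) = (0, e^h)` between the boundary point `I∞ = (0,0)`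
and the point `z`, computed in the conformal disc model centered at `O(h)`. -/
def hypAngleAt (h : ℝ) (z : ℂ) : ℝ :=
  EuclideanGeometry.angle (toDisc h z) (0 : ℂ) (toDisc h 0)

open InnerProductGeometry

lemma Complex.real_inner_neg_one_right (u : ℂ) : inner ℝ u (-1 : ℂ) = -u.re := by
  simp [Complex.inner]

lemma Complex.abs_im_eq_sin_angle_neg_one_mul_norm (u : ℂ) :
    |u.im| = Real.sin (angle u (-1)) * ‖u‖ := by
  have h := sin_angle_mul_norm_mul_norm u (-1)
  rw [norm_neg, norm_one, mul_one] at h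
  rw [h, ← sqrt_sq_eq_abs]
  congr 1
  rw [real_inner_self_eq_norm_sq, real_inner_self_eq_norm_sq, norm_neg, norm_one,
    real_inner_neg_one_right, Complex.sq_norm, normSq_apply]
  ring

lemma Complex.abs_im_le_of_angle_neg_one_le {u : ℂ} {a : ℝ} (h : angle u (-1) ≤ a) :
    |u.im| ≤ a * ‖u‖ := by
  rw [abs_im_eq_sin_angle_neg_one_mul_norm]
  gcongr
  exact (sin_le (angle_nonneg _ _)).trans h

lemma Complex.re_neg_of_angle_neg_one_lt {u : ℂ} (h : angle u (-1) < π / 2) : u.re < 0 := by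
  rw [angle, arccos_lt_pi_div_two, norm_neg, norm_one, mul_one, real_inner_neg_one_right] at h
  by_contra! hre
  exact h.not_ge (div_nonpos_of_nonpos_of_nonneg (by linarith) (norm_nonneg u))

lemma exp_arcosh_le {t : ℝ} (ht : 0 < t) : exp (_root_.arcosh t) ≤ 2 * t := by
  have hsqrt : √(t ^ 2 - 1) ≤ t := sqrt_le_iff.2 ⟨ht.le, by linarith⟩
  rw [_root_.arcosh, exp_log (by positivity)]
  linarith

lemma exp_dHalf_le {z w : ℂ} (hz : 0 < z.im) (hw : 0 < w.im) :
    exp (dHalf z w) ≤ 2 + ‖z - w‖ ^ 2 / (z.im * w.im) := by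
  have hcosh : 0 < 1 + ((z.re - w.re) ^ 2 + (z.im - w.im) ^ 2) / (2 * z.im * w.im) := by
    positivity
  calc exp (dHalf z w) ≤ 2 * (1 + ((z.re - w.re) ^ 2 + (z.im - w.im) ^ 2) / (2 * z.im * w.im)) :=
        exp_arcosh_le hcosh
    _ = 2 + ‖z - w‖ ^ 2 / (z.im * w.im) := by
        rw [Complex.sq_norm, Complex.normSq_apply, Complex.sub_re, Complex.sub_im]
        field_simp

open Complex ComplexConjugate

lemma sq_norm_add_I_mul (z : ℂ) (E : ℝ) : ‖z + I * E‖ ^ 2 = z.re ^ 2 + (z.im + E) ^ 2 := by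
  rw [Complex.sq_norm, normSq_apply, add_re, add_im, I_mul_re, I_mul_im, ofReal_re, ofReal_im]
  ring

lemma toDisc_eq_div (h : ℝ) (z : ℂ) :
    toDisc h z = (z - I * Real.exp h) / (z + I * Real.exp h) := by
  rw [toDisc, ← mk_eq_add_mul_I, ← sq_norm_add_I_mul, ← normSq_eq_norm_sq, ← mul_conj,
    show Real.exp (2 * h) = Real.exp h ^ 2 by rw [← Real.exp_nat_mul]; norm_num]
  generalize Real.exp h = E
  have hnum : (⟨z.re ^ 2 + z.im ^ 2 - E ^ 2, -2 * z.re * E⟩ : ℂ)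
      = (z - I * E) * conj (z + I * E) := by
    apply Complex.ext <;>
      simp only [mul_re, mul_im, sub_re, sub_im, add_re, add_im, conj_re, conj_im, I_re,
        I_im, ofReal_re, ofReal_im] <;>
      ring
  rw [hnum]
  rcases eq_or_ne (z + I * E) 0 with h0 | h0
  · simp [h0]
  · rw [mul_div_mul_right _ _ ((map_ne_zero _).2 h0)]

lemma toDisc_zero (h : ℝ) : toDisc h 0 = -1 := by
  rw [toDisc_eq_div, zero_sub, zero_add, neg_div, div_self (by simp)]

lemma hypAngleAt_eq_angle (h : ℝ) (z : ℂ) : hypAngleAt h z = angle (toDisc h z) (-1) := by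
  simp [hypAngleAt, EuclideanGeometry.angle, toDisc_zero]

lemma toDisc_re (h : ℝ) (z : ℂ) :
    (toDisc h z).re = (‖z‖ ^ 2 - Real.exp h ^ 2) / ‖z + I * Real.exp h‖ ^ 2 := by
  rw [toDisc, ← mk_eq_add_mul_I, div_ofReal_re, sq_norm_add_I_mul, Complex.sq_norm, normSq_apply,
    ← Real.exp_nat_mul]
  push_cast
  ring

lemma toDisc_im (h : ℝ) (z : ℂ) :
    (toDisc h z).im = -2 * z.re * Real.exp h / ‖z + I * Real.exp h‖ ^ 2 := by
  rw [toDisc, ← mk_eq_add_mul_I, div_ofReal_im, sq_norm_add_I_mul]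

lemma norm_lt_exp_of_hypAngleAt_lt {h : ℝ} {z : ℂ} (hθ : hypAngleAt h z < π / 2) :
    ‖z‖ < Real.exp h := by
  have hre := re_neg_of_angle_neg_one_lt (hypAngleAt_eq_angle h z ▸ hθ)
  rw [toDisc_re] at hre
  refine lt_of_pow_lt_pow_left₀ 2 (Real.exp_pos h).le ?_
  by_contra! hle
  exact hre.not_ge (div_nonneg (by linarith) (sq_nonneg _))

lemma norm_sub_I_mul_mul_norm_add_I_mul_le {z : ℂ} {E : ℝ} (hz : ‖z‖ < E) :
    ‖z - I * E‖ * ‖z + I * E‖ ≤ 2 * E ^ 2 :=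
  calc ‖z - I * E‖ * ‖z + I * E‖ = ‖z ^ 2 + (E : ℂ) ^ 2‖ := by
        rw [← norm_mul]; congr 1; linear_combination (-(E : ℂ) ^ 2) * I_sq
    _ ≤ ‖z‖ ^ 2 + E ^ 2 := by
        refine (norm_add_le _ _).trans ?_
        rw [norm_pow, norm_pow, norm_real, Real.norm_eq_abs, sq_abs]
    _ ≤ 2 * E ^ 2 := by nlinarith [norm_nonneg z]

lemma abs_re_le_of_hypAngleAt_le {A h : ℝ} {z : ℂ} (hθ : hypAngleAt h z ≤ A * Real.exp (-h))
    (hsmall : A * Real.exp (-h) < π / 2) : |z.re| ≤ A := by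
  have hE := Real.exp_pos h
  have hz : ‖z‖ < Real.exp h := norm_lt_exp_of_hypAngleAt_lt (hθ.trans_lt hsmall)
  have hN : 0 < ‖z + I * Real.exp h‖ := norm_pos_iff.2 fun h0 => by
    rw [eq_neg_of_add_eq_zero_left h0] at hz
    simp at hz
  have him := abs_im_le_of_angle_neg_one_le (hypAngleAt_eq_angle h z ▸ hθ)
  rw [toDisc_im, toDisc_eq_div, norm_div, abs_div, abs_of_pos (pow_pos hN 2)] at him
  have ha : 0 ≤ A * Real.exp (-h) := (EuclideanGeometry.angle_nonneg _ _ _).trans hθ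
  refine le_of_mul_le_mul_right ?_ (by positivity : 0 < 2 * Real.exp h)
  calc |z.re| * (2 * Real.exp h) = |-2 * z.re * Real.exp h| := by
        rw [abs_mul, abs_mul, abs_of_pos hE]; norm_num; ring
    _ ≤ A * Real.exp (-h) * (‖z - I * Real.exp h‖ / ‖z + I * Real.exp h‖)
          * ‖z + I * Real.exp h‖ ^ 2 := (div_le_iff₀ (pow_pos hN 2)).1 him
    _ = A * Real.exp (-h) * (‖z - I * Real.exp h‖ * ‖z + I * Real.exp h‖) := by
        field_simp
    _ ≤ A * Real.exp (-h) * (2 * Real.exp h ^ 2) :=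
        mul_le_mul_of_nonneg_left (norm_sub_I_mul_mul_norm_add_I_mul_le hz) ha
    _ = A * (2 * Real.exp h) := by rw [Real.exp_neg]; field_simp

lemma exp_sq_mul_im_le_of_le_dHalf {h : ℝ} {z : ℂ} (hy : 0 < z.im)
    (hd : h ≤ dHalf (I * Real.exp h) z) : Real.exp h ^ 2 * z.im ≤ ‖z‖ ^ 2 + Real.exp h ^ 2 := by
  have hexp := Real.exp_le_exp.2 hd
  have hE := Real.exp_pos h
  generalize Real.exp h = E at hexp hE ⊢
  replace hexp := hexp.trans (exp_dHalf_le (by simpa using hE) hy)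
  have hdist : ‖I * E - z‖ ^ 2 = ‖z‖ ^ 2 - 2 * E * z.im + E ^ 2 := by
    rw [Complex.sq_norm, Complex.sq_norm, normSq_apply, normSq_apply, sub_re, sub_im, I_mul_re,
      I_mul_im, ofReal_re, ofReal_im]
    ring
  rw [hdist, I_mul_im, ofReal_re, ← sub_le_iff_le_add', le_div_iff₀ (by positivity)] at hexp
  nlinarith

theorem cone_minus_ball_in_cylinder_general (A : ℝ) :
    ∃ h₀ : ℝ, ∀ h : ℝ, h₀ ≤ h → ∀ x y : ℝ, 0 < y →
      hypAngleAt h (x + y * Complex.I) ≤ A * Real.exp (-h) →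
      h ≤ dHalf (Complex.I * Real.exp h) (x + y * Complex.I) →
      |x| ≤ A ∧ y ≤ 3 / 2 := by
  refine ⟨Real.log (2 * A + 3), fun h hh x y hy hθ hd => ?_⟩
  rw [← mk_eq_add_mul_I] at hθ hd
  have hA : 0 ≤ A :=
    nonneg_of_mul_nonneg_left ((EuclideanGeometry.angle_nonneg _ _ _).trans hθ) (Real.exp_pos _)
  have hE : 2 * A + 3 ≤ Real.exp h := by
    rwa [← Real.exp_le_exp, Real.exp_log (by linarith)] at hh
  have hsmall : A * Real.exp (-h) < π / 2 := by
    have : A * Real.exp (-h) < 1 := by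
      rw [Real.exp_neg, ← div_eq_mul_inv, div_lt_one (by linarith)]; linarith
    linarith [pi_gt_three]
  have hx := abs_re_le_of_hypAngleAt_le hθ hsmall
  have hz := norm_lt_exp_of_hypAngleAt_lt (hθ.trans_lt hsmall)
  have hd' := exp_sq_mul_im_le_of_le_dHalf hy hd
  have hnorm : ‖(⟨x, y⟩ : ℂ)‖ ^ 2 = x ^ 2 + y ^ 2 := by
    rw [Complex.sq_norm, normSq_mk, sq, sq]
  have hz2 : x ^ 2 + y ^ 2 < Real.exp h ^ 2 :=
    hnorm ▸ pow_lt_pow_left₀ hz (norm_nonneg _) two_ne_zero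
  have hx2 : x ^ 2 ≤ A ^ 2 := sq_le_sq.2 (hx.trans (le_abs_self A))
  rw [hnorm] at hd'
  have hy2 : y < 2 := by nlinarith
  refine ⟨hx, ?_⟩
  by_contra! hy3
  nlinarith [mul_lt_mul_of_pos_right hy3 (pow_pos (Real.exp_pos h) 2)]

/-- Geometric lemma: fix `A ≥ 0`. For all sufficiently large `h` (depending only on
`A`), every point `z = (x,y)` of the upper half-plane whose angle at `O(h) = (0, e^h)`
with the boundary point `I∞ = (0,0)` is at most `A e^{-h}` and whose hyperbolic
distance to `O(h)` is at least `h` satisfies `|x| ≤ A` and `y ≤ 3/2`. -/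
theorem cone_minus_ball_in_cylinder (A : ℝ) (hA : 0 ≤ A) :
    ∃ h₀ : ℝ, ∀ h : ℝ, h₀ ≤ h → ∀ x y : ℝ, 0 < y →
      hypAngleAt h (x + y * Complex.I) ≤ A * Real.exp (-h) →
      h ≤ dHalf (Complex.I * Real.exp h) (x + y * Complex.I) →
      |x| ≤ A ∧ y ≤ 3 / 2 :=
  cone_minus_ball_in_cylinder_general A

end
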